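/- arXiv:1208.3246 — 3 statements merged into one kernel-verified Lean document; each statement's English description precedes it below -/
import Mathlib

section
/- Let 1 ≤ q ≤ 2 ≤ p < ∞ and define r by 1/r = 1/q − 1/p. For every bounded linear operator A : ℓ^p → ℓ^q whose matrix entries a_{j,k} := (A e_k)_j are all nonnegative reals, one has ( ∑_j ( ∑_k a_{j,k}² )^{r/2} )^{1/r} ≤ ‖A‖, i.e. the Hardy–Littlewood row inequality holds with constant M = 1. -/
/-!
Put `S j = ∑ k, a j k ^ 2` and `T = ∑ j, S j ^ (r / 2)` over finite sections of the matrix, and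
test `A` on `x k = (∑ j, (w j * a j k) ^ p) ^ (1 / p)` with row weights
`w j = S j ^ (r / (2p) - 1 / 2)`. Since `x k ≥ w j * a j k` and all entries are nonnegative,
`(A x) j ≥ w j * S j`, and `(w j * S j) ^ q = S j ^ (r / 2)`; so `‖A x‖_q ^ q ≥ T`. On the other
side `ℓ² ⊂ ℓ^p` (as `p ≥ 2`) gives `‖x‖_p ^ p ≤ ∑ j, w j ^ p * S j ^ (p / 2) = T`. Hence
`T ^ (1 / q) ≤ ‖A‖ * T ^ (1 / p)`, i.e. `T ^ (1 / r) ≤ ‖A‖`, and the infinite sums follow by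
monotone limits.
-/

open Finset Filter Topology

open scoped ENNReal

namespace Real

theorem sum_rpow_le_rpow_sum {ι : Type*} (s : Finset ι) {f : ι → ℝ} (hf : ∀ i ∈ s, 0 ≤ f i)
    {e : ℝ} (he : 1 ≤ e) : ∑ i ∈ s, f i ^ e ≤ (∑ i ∈ s, f i) ^ e := by
  induction s using Finset.cons_induction with
  | empty => simp [zero_rpow (by linarith : e ≠ 0)]
  | cons i s _ ih =>
    rw [forall_mem_cons] at hf
    rw [sum_cons, sum_cons]
    exact (add_le_add le_rfl (ih hf.2)).trans (add_rpow_le_rpow_add hf.1 (sum_nonneg hf.2) he)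

theorem sum_rpow_le_sum_sq_rpow {ι : Type*} (s : Finset ι) {f : ι → ℝ} (hf : ∀ i ∈ s, 0 ≤ f i)
    {p : ℝ} (hp : 2 ≤ p) : ∑ i ∈ s, f i ^ p ≤ (∑ i ∈ s, f i ^ 2) ^ (p / 2) := by
  calc ∑ i ∈ s, f i ^ p = ∑ i ∈ s, (f i ^ 2) ^ (p / 2) := sum_congr rfl fun i hi => by
        rw [← rpow_natCast, ← rpow_mul (hf i hi)]
        ring_nf
    _ ≤ _ := sum_rpow_le_rpow_sum s (fun i _ => sq_nonneg _) (by linarith)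

theorem le_rpow_sum_rpow_inv {ι : Type*} {s : Finset ι} {f : ι → ℝ} (hf : ∀ i ∈ s, 0 ≤ f i)
    {p : ℝ} (hp : 0 < p) {i : ι} (hi : i ∈ s) : f i ≤ (∑ j ∈ s, f j ^ p) ^ p⁻¹ :=
  (le_rpow_inv_iff_of_pos (hf i hi) (sum_nonneg fun j hj => rpow_nonneg (hf j hj) _) hp).2
    (single_le_sum (fun j hj => rpow_nonneg (hf j hj) _) hi)

theorem le_rpow_of_rpow_inv_le_mul {T M p q r : ℝ} (hT : 0 ≤ T) (hM : 0 ≤ M) (hr : 0 < r)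
    (hpqr : r⁻¹ = q⁻¹ - p⁻¹) (h : T ^ q⁻¹ ≤ M * T ^ p⁻¹) : T ≤ M ^ r := by
  rcases hT.eq_or_lt with rfl | hT
  · exact rpow_nonneg hM r
  rw [show q⁻¹ = r⁻¹ + p⁻¹ by linarith, rpow_add hT,
    mul_le_mul_iff_of_pos_right (rpow_pos_of_pos hT _)] at h
  exact (rpow_inv_le_iff_of_pos hT.le hM hr).1 h

theorem rpow_weight_pow_mul {S p r : ℝ} (hS : 0 ≤ S) (hp : 0 < p) (hr : 0 < r) :
    (S ^ (r / (2 * p) - 1 / 2)) ^ p * S ^ (p / 2) = S ^ (r / 2) := by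
  have hexp : (r / (2 * p) - 1 / 2) * p + p / 2 = r / 2 := by
    field_simp
    ring
  rw [← rpow_mul hS, ← rpow_add' hS (by rw [hexp]; positivity), hexp]

theorem rpow_weight_mul_pow {S p q r : ℝ} (hS : 0 ≤ S) (hp : 0 < p) (hq : 0 < q) (hr : 0 < r)
    (hpqr : r⁻¹ = q⁻¹ - p⁻¹) : (S ^ (r / (2 * p) - 1 / 2) * S) ^ q = S ^ (r / 2) := by
  have hexp : (r / (2 * p) - 1 / 2 + 1) * q = r / 2 := by
    field_simp at hpqr ⊢
    linarith
  have hpos : 0 < r / (2 * p) - 1 / 2 + 1 := by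
    have := div_pos hr (mul_pos two_pos hp)
    linarith
  rw [← rpow_add_one' hS hpos.ne', ← rpow_mul hS, hexp]

end Real

theorem row_inequality_finite_of_nonneg {ι κ : Type*} (F : Finset ι) (G : Finset κ)
    {a : ι → κ → ℝ} (ha : ∀ j k, 0 ≤ a j k) {p q r M : ℝ} (hp : 2 ≤ p) (hq : 0 < q)
    (hr : 0 < r) (hpqr : r⁻¹ = q⁻¹ - p⁻¹) (hM : 0 ≤ M)
    (hA : ∀ x : κ → ℝ, (∀ k, 0 ≤ x k) →
      (∑ j ∈ F, (∑ k ∈ G, a j k * x k) ^ q) ^ q⁻¹ ≤ M * (∑ k ∈ G, x k ^ p) ^ p⁻¹) :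
    ∑ j ∈ F, (∑ k ∈ G, a j k ^ 2) ^ (r / 2) ≤ M ^ r := by
  have hp0 : 0 < p := by linarith
  set S : ι → ℝ := fun j => ∑ k ∈ G, a j k ^ 2
  have hS : ∀ j, 0 ≤ S j := fun j => sum_nonneg fun k _ => sq_nonneg _
  set w : ι → ℝ := fun j => S j ^ (r / (2 * p) - 1 / 2)
  have hw : ∀ j, 0 ≤ w j := fun j => Real.rpow_nonneg (hS j) _
  have hwa : ∀ j k, 0 ≤ w j * a j k := fun j k => mul_nonneg (hw j) (ha j k)
  set x : κ → ℝ := fun k => (∑ j ∈ F, (w j * a j k) ^ p) ^ p⁻¹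
  have hx : ∀ k, 0 ≤ x k := fun k =>
    Real.rpow_nonneg (sum_nonneg fun j _ => Real.rpow_nonneg (hwa j k) _) _
  set T := ∑ j ∈ F, S j ^ (r / 2)
  have hT : 0 ≤ T := sum_nonneg fun j _ => Real.rpow_nonneg (hS j) _
  have hxT : ∑ k ∈ G, x k ^ p ≤ T := calc
    ∑ k ∈ G, x k ^ p = ∑ j ∈ F, w j ^ p * ∑ k ∈ G, a j k ^ p := by
      simp only [x, mul_sum, ← Real.mul_rpow (hw _) (ha _ _)]
      rw [sum_comm]
      exact sum_congr rfl fun k _ => Real.rpow_inv_rpow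
        (sum_nonneg fun j _ => Real.rpow_nonneg (hwa j k) _) hp0.ne'
    _ ≤ ∑ j ∈ F, w j ^ p * S j ^ (p / 2) := sum_le_sum fun j _ =>
      mul_le_mul_of_nonneg_left (Real.sum_rpow_le_sum_sq_rpow G (fun k _ => ha j k) hp)
        (Real.rpow_nonneg (hw j) _)
    _ = T := sum_congr rfl fun j _ => Real.rpow_weight_pow_mul (hS j) hp0 hr
  have hTAx : T ≤ ∑ j ∈ F, (∑ k ∈ G, a j k * x k) ^ q := sum_le_sum fun j hj => by
    rw [← Real.rpow_weight_mul_pow (hS j) hp0 hq hr hpqr]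
    refine Real.rpow_le_rpow (mul_nonneg (hw j) (hS j)) ?_ hq.le
    simp only [S, mul_sum]
    exact sum_le_sum fun k _ => by
      rw [sq, ← mul_assoc, mul_comm (a j k)]
      exact mul_le_mul_of_nonneg_right
        (Real.le_rpow_sum_rpow_inv (fun j _ => hwa j k) hp0 hj) (ha j k)
  refine Real.le_rpow_of_rpow_inv_le_mul hT hM hr hpqr ?_
  calc T ^ q⁻¹ ≤ (∑ j ∈ F, (∑ k ∈ G, a j k * x k) ^ q) ^ q⁻¹ :=
        Real.rpow_le_rpow hT hTAx (inv_nonneg.2 hq.le)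
    _ ≤ M * (∑ k ∈ G, x k ^ p) ^ p⁻¹ := hA x hx
    _ ≤ M * T ^ p⁻¹ := mul_le_mul_of_nonneg_left
        (Real.rpow_le_rpow (sum_nonneg fun k _ => Real.rpow_nonneg (hx k) _) hxT
          (inv_nonneg.2 hp0.le)) hM

section lp

variable {𝕜 ι κ : Type*} [RCLike 𝕜] [DecidableEq κ] {p q : ℝ≥0∞} [Fact (1 ≤ p)] [Fact (1 ≤ q)]
  (A : lp (fun _ : κ => 𝕜) p →L[𝕜] lp (fun _ : ι => 𝕜) q) {a : ι → κ → ℝ}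

theorem lp_apply_sum_single (hAa : ∀ j k, A (lp.single p k 1) j = (a j k : 𝕜)) (G : Finset κ)
    (x : κ → 𝕜) (j : ι) : A (∑ k ∈ G, lp.single p k (x k)) j = ∑ k ∈ G, (a j k : 𝕜) * x k := by
  simp only [map_sum, lp.coeFn_sum, Finset.sum_apply]
  refine sum_congr rfl fun k _ => ?_
  have hsingle : (lp.single p k (x k) : lp (fun _ : κ => 𝕜) p) = x k • lp.single p k 1 := by
    rw [← lp.single_smul, smul_eq_mul, mul_one]
  rw [hsingle, map_smul, lp.coeFn_smul, Pi.smul_apply, hAa, smul_eq_mul, mul_comm]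

theorem lp_matrix_section_le_opNorm_mul (ha : ∀ j k, 0 ≤ a j k)
    (hAa : ∀ j k, A (lp.single p k 1) j = (a j k : 𝕜)) (hp : 0 < p.toReal) (hq : 0 < q.toReal)
    (F : Finset ι) (G : Finset κ) {x : κ → ℝ} (hx : ∀ k, 0 ≤ x k) :
    (∑ j ∈ F, (∑ k ∈ G, a j k * x k) ^ q.toReal) ^ q.toReal⁻¹ ≤
      ‖A‖ * (∑ k ∈ G, x k ^ p.toReal) ^ p.toReal⁻¹ := by
  set X : lp (fun _ : κ => 𝕜) p := ∑ k ∈ G, lp.single p k (x k : 𝕜)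
  have hX : ‖X‖ = (∑ k ∈ G, x k ^ p.toReal) ^ p.toReal⁻¹ := by
    rw [← Real.rpow_rpow_inv (norm_nonneg X) hp.ne', lp.norm_sum_single hp]
    simp only [RCLike.norm_ofReal, abs_of_nonneg (hx _)]
  have hAX : ∀ j, ‖A X j‖ = ∑ k ∈ G, a j k * x k := fun j => by
    rw [lp_apply_sum_single A hAa]
    norm_cast
    rw [abs_of_nonneg (sum_nonneg fun k _ => mul_nonneg (ha j k) (hx k))]
  calc (∑ j ∈ F, (∑ k ∈ G, a j k * x k) ^ q.toReal) ^ q.toReal⁻¹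
      = (∑ j ∈ F, ‖A X j‖ ^ q.toReal) ^ q.toReal⁻¹ := by simp only [hAX]
    _ ≤ ‖A X‖ := (Real.rpow_inv_le_iff_of_pos (sum_nonneg fun j _ => by positivity)
        (norm_nonneg _) hq).2 (lp.sum_rpow_le_norm_rpow hq _ F)
    _ ≤ ‖A‖ * ‖X‖ := A.le_opNorm X
    _ = _ := by rw [hX]

end lp

theorem tsum_rpow_tsum_le_of_sum_rpow_sum_le {ι κ : Type*} {f : ι → κ → ℝ}
    (hf : ∀ j k, 0 ≤ f j k) {s C : ℝ} (hs : 0 < s) (h : ∀ F G, ∑ j ∈ F, (∑ k ∈ G, f j k) ^ s ≤ C) :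
    ∑' j, (∑' k, f j k) ^ s ≤ C := by
  have hC : 0 ≤ C := by simpa using h ∅ ∅
  have hrow : ∀ j, Summable (f j) := fun j =>
    summable_of_sum_le (c := C ^ s⁻¹) (hf j) fun G =>
      (Real.le_rpow_inv_iff_of_pos (sum_nonneg fun k _ => hf j k) hC hs).2
        (by simpa using h {j} G)
  refine Real.tsum_le_of_sum_le (fun j => Real.rpow_nonneg (tsum_nonneg (hf j)) _) fun F => ?_
  have hlim : Tendsto (fun G => ∑ j ∈ F, (∑ k ∈ G, f j k) ^ s) atTop
      (𝓝 (∑ j ∈ F, (∑' k, f j k) ^ s)) :=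
    tendsto_finsetSum F fun j _ =>
      ((Real.continuousAt_rpow_const _ s (Or.inr hs.le)).tendsto).comp (hrow j).hasSum
  exact le_of_tendsto' hlim (h F)

theorem hardy_littlewood_row_positive_general (p q r : ℝ) (hq1 : 1 ≤ q) (hp2 : 2 ≤ p)
    [Fact (1 ≤ ENNReal.ofReal p)] [Fact (1 ≤ ENNReal.ofReal q)]
    (hr : 0 < r) (hrdef : 1 / r = 1 / q - 1 / p)
    (A : lp (fun _ : ℕ => ℂ) (ENNReal.ofReal p) →L[ℂ] lp (fun _ : ℕ => ℂ) (ENNReal.ofReal q))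
    (a : ℕ → ℕ → ℝ) (ha : ∀ j k, 0 ≤ a j k)
    (hAa : ∀ j k : ℕ, A (lp.single (ENNReal.ofReal p) k 1) j = (a j k : ℂ)) :
    (∑' j : ℕ, (∑' k : ℕ, a j k ^ (2 : ℝ)) ^ (r / 2)) ^ (1 / r) ≤ ‖A‖ := by
  have hp : (ENNReal.ofReal p).toReal = p := ENNReal.toReal_ofReal (by linarith)
  have hq : (ENNReal.ofReal q).toReal = q := ENNReal.toReal_ofReal (by linarith)
  have hsections : ∀ F G, ∑ j ∈ F, (∑ k ∈ G, a j k ^ 2) ^ (r / 2) ≤ ‖A‖ ^ r := fun F G =>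
    row_inequality_finite_of_nonneg (q := q) F G ha hp2 (by linarith) hr
      (by simpa only [one_div] using hrdef) (norm_nonneg A) fun x hx => by
        simpa only [hp, hq] using
          lp_matrix_section_le_opNorm_mul A ha hAa (by linarith) (by linarith) F G hx
  have hsum := tsum_rpow_tsum_le_of_sum_rpow_sum_le (fun j k => sq_nonneg (a j k)) (half_pos hr)
    hsections
  simp only [Real.rpow_two]
  calc (∑' j, (∑' k, a j k ^ 2) ^ (r / 2)) ^ (1 / r) ≤ (‖A‖ ^ r) ^ (1 / r) :=
        Real.rpow_le_rpow
          (tsum_nonneg fun j => Real.rpow_nonneg (tsum_nonneg fun k => sq_nonneg _) _) hsum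
          (by positivity)
    _ = ‖A‖ := by rw [one_div, Real.rpow_rpow_inv (norm_nonneg A) hr.ne']

/-- **Hardy–Littlewood row inequality for positive operators, with constant 1.**
For `1 ≤ q ≤ 2 ≤ p < ∞` and `1/r = 1/q - 1/p`, every bounded operator `A : ℓ^p → ℓ^q`
whose matrix entries `(A e_k) j = a j k` are nonnegative reals satisfies
`(∑_j (∑_k (a j k)²)^(r/2))^(1/r) ≤ ‖A‖`. -/
theorem hardy_littlewood_row_positive (p q r : ℝ) (hq1 : 1 ≤ q) (hq2 : q ≤ 2) (hp2 : 2 ≤ p)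
    [Fact (1 ≤ ENNReal.ofReal p)] [Fact (1 ≤ ENNReal.ofReal q)]
    (hr : 0 < r) (hrdef : 1 / r = 1 / q - 1 / p)
    (A : lp (fun _ : ℕ => ℂ) (ENNReal.ofReal p) →L[ℂ] lp (fun _ : ℕ => ℂ) (ENNReal.ofReal q))
    (a : ℕ → ℕ → ℝ) (ha : ∀ j k, 0 ≤ a j k)
    (hAa : ∀ j k : ℕ, A (lp.single (ENNReal.ofReal p) k 1) j = (a j k : ℂ)) :
    (∑' j : ℕ, (∑' k : ℕ, a j k ^ (2 : ℝ)) ^ (r / 2)) ^ (1 / r) ≤ ‖A‖ :=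
  hardy_littlewood_row_positive_general p q r hq1 hp2 hr hrdef A a ha hAa
end

section
/- Let 1 ≤ q < p < ∞ and define r by 1/r = 1/q − 1/p. For every bounded linear operator A : ℓ^p → ℓ^q whose matrix entries a_{j,k} := (A e_k)_j are all nonnegative reals, one has ( ∑_j ∑_k a_{j,k}^r )^{1/r} ≤ ‖A‖. (In particular this holds regardless of whether r ≥ 2 or r ≤ 2, so the Hardy–Littlewood entrywise ℓ^r inequality holds for positive operators with constant M = 1 for all r.) -/
/-!
Fix finite sets `J`, `K` of rows and columns, let `c k = ∑_{j ∈ J} a j k ^ r` be the column sums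
and `S = ∑_{k ∈ K} c k`, and test `A` on `x = ∑_{k ∈ K} c k ^ (1/p) e_k`, so that `‖x‖_p ^ p = S`.
By positivity, `(A x) j = ∑_k a j k * c k ^ (1/p)`. As `q ≥ 1` and `r/q = 1 + r/p`, each row obeys
`(∑_k a j k ^ r) ^ (1/q) ≤ ∑_k a j k ^ (r/q) = ∑_k a j k * a j k ^ (r/p) ≤ (A x) j`,
and summing `q`-th powers gives `S ≤ ‖A x‖_q ^ q ≤ ‖A‖ ^ q * S ^ (q/p)`, i.e. `S ^ (q/r) ≤ ‖A‖ ^ q`.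
-/

open Finset

namespace Real

theorem rpow_sum_le_sum_rpow {ι : Type*} {s : Finset ι} {f : ι → ℝ} (hf : ∀ i ∈ s, 0 ≤ f i)
    {e : ℝ} (he₀ : 0 < e) (he₁ : e ≤ 1) : (∑ i ∈ s, f i) ^ e ≤ ∑ i ∈ s, f i ^ e := by
  induction s using Finset.cons_induction with
  | empty => simp [zero_rpow he₀.ne']
  | cons i s hi ih =>
    rw [sum_cons, sum_cons]
    have hs : ∀ j ∈ s, 0 ≤ f j := fun j hj => hf j (mem_cons_of_mem hj)
    calc (f i + ∑ j ∈ s, f j) ^ e ≤ f i ^ e + (∑ j ∈ s, f j) ^ e :=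
          rpow_add_le_add_rpow (hf i (mem_cons_self i s)) (sum_nonneg hs) he₀.le he₁
      _ ≤ f i ^ e + ∑ j ∈ s, f j ^ e := add_le_add_right (ih hs) _

theorem pos_of_one_div_eq_one_div_sub_one_div {p q r : ℝ} (hq : 0 < q) (hqp : q < p)
    (hr : 1 / r = 1 / q - 1 / p) : 0 < r :=
  one_div_pos.mp (hr ▸ sub_pos.mpr (one_div_lt_one_div_of_lt hq hqp))

theorem sum_rpow_le_rpow_sum_mul_rpow {κ : Type*} {K : Finset κ} {a c : κ → ℝ} {p q r : ℝ}
    (hq : 1 ≤ q) (hp : 0 < p) (hr : 0 < r) (hrq : r / q = 1 + r / p)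
    (ha : ∀ k ∈ K, 0 ≤ a k) (hac : ∀ k ∈ K, a k ^ r ≤ c k) :
    ∑ k ∈ K, a k ^ r ≤ (∑ k ∈ K, a k * c k ^ (1 / p)) ^ q := by
  have hq₀ : 0 < q := one_pos.trans_le hq
  have hrow : (∑ k ∈ K, a k ^ r) ^ (1 / q) ≤ ∑ k ∈ K, a k * c k ^ (1 / p) := calc
    (∑ k ∈ K, a k ^ r) ^ (1 / q) ≤ ∑ k ∈ K, (a k ^ r) ^ (1 / q) :=
        rpow_sum_le_sum_rpow (fun k hk => rpow_nonneg (ha k hk) r) (by positivity)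
          ((div_le_one hq₀).2 hq)
    _ ≤ ∑ k ∈ K, a k * c k ^ (1 / p) := by
        refine sum_le_sum fun k hk => ?_
        rw [← rpow_mul (ha k hk), mul_one_div, hrq, rpow_add' (ha k hk) (by positivity),
          rpow_one, ← mul_one_div, rpow_mul (ha k hk)]
        exact mul_le_mul_of_nonneg_left
          (rpow_le_rpow (rpow_nonneg (ha k hk) r) (hac k hk) (by positivity)) (ha k hk)
  rw [one_div] at hrow
  exact (rpow_inv_le_iff_of_pos (sum_nonneg fun k hk => rpow_nonneg (ha k hk) r)
    (sum_nonneg fun k hk => mul_nonneg (ha k hk) (rpow_nonneg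
      ((rpow_nonneg (ha k hk) r).trans (hac k hk)) _)) hq₀).1 hrow

theorem le_rpow_of_le_rpow_mul_rpow {S M p q r : ℝ} (hS : 0 ≤ S) (hM : 0 ≤ M) (hq : 0 < q)
    (hqp : q < p) (hr : 1 / r = 1 / q - 1 / p) (h : S ≤ M ^ q * S ^ (q / p)) : S ≤ M ^ r := by
  have hr₀ : 0 < r := pos_of_one_div_eq_one_div_sub_one_div hq hqp hr
  rcases hS.eq_or_lt with rfl | hS₀
  · exact rpow_nonneg hM r
  have hsplit : S ^ (q / p) * S ^ (q / r) = S := by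
    rw [← rpow_add hS₀, div_eq_mul_one_div q r, hr, mul_sub, mul_one_div_cancel hq.ne',
      ← div_eq_mul_one_div, add_sub_cancel, rpow_one]
  have hSq : S ^ (q / r) ≤ M ^ q :=
    le_of_mul_le_mul_left (by rw [hsplit, mul_comm]; exact h) (rpow_pos_of_pos hS₀ _)
  rwa [← rpow_le_rpow_iff hS (rpow_nonneg hM r) (div_pos hq hr₀), ← rpow_mul hM,
    mul_div_cancel₀ _ hr₀.ne']

theorem tsum_tsum_le_of_sum_sum_le {ι κ : Type*} {f : ι → κ → ℝ} {B : ℝ}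
    (hf : ∀ i k, 0 ≤ f i k) (h : ∀ (I : Finset ι) (K : Finset κ), ∑ i ∈ I, ∑ k ∈ K, f i k ≤ B) :
    ∑' i, ∑' k, f i k ≤ B := by
  classical
  have hprod (F : Finset (ι × κ)) : ∑ x ∈ F, f x.1 x.2 ≤ B := calc
    ∑ x ∈ F, f x.1 x.2 ≤ ∑ x ∈ F.image Prod.fst ×ˢ F.image Prod.snd, f x.1 x.2 :=
        sum_le_sum_of_subset_of_nonneg
          (fun x hx => mem_product.2 ⟨mem_image_of_mem _ hx, mem_image_of_mem _ hx⟩)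
          (fun x _ _ => hf x.1 x.2)
    _ ≤ B := by rw [sum_product]; exact h _ _
  have hsum : Summable fun x : ι × κ => f x.1 x.2 :=
    summable_of_sum_le (fun x => hf x.1 x.2) hprod
  rw [← hsum.tsum_prod' hsum.prod_factor]
  exact hsum.tsum_le_of_sum_le hprod

end Real

namespace ContinuousLinearMap

variable {𝕜 : Type*} [RCLike 𝕜] {ι κ : Type*} [DecidableEq κ]

theorem apply_sum_lpSingle {P Q : ENNReal} [Fact (1 ≤ P)] [Fact (1 ≤ Q)]
    (A : lp (fun _ : κ => 𝕜) P →L[𝕜] lp (fun _ : ι => 𝕜) Q) (K : Finset κ) (x : κ → 𝕜)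
    (j : ι) : A (∑ k ∈ K, lp.single P k (x k)) j = ∑ k ∈ K, x k * A (lp.single P k 1) j := by
  simp only [map_sum, lp.coeFn_sum, Finset.sum_apply]
  refine sum_congr rfl fun k _ => ?_
  have hsingle : lp.single P k (x k) = x k • (lp.single P k 1 : lp (fun _ : κ => 𝕜) P) := by
    rw [← lp.single_smul, smul_eq_mul, mul_one]
  rw [hsingle, map_smul, lp.coeFn_smul, Pi.smul_apply, smul_eq_mul]

theorem sum_sum_entry_rpow_le_opNorm_rpow {p q r : ℝ} (hq : 1 ≤ q) (hqp : q < p)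
    [Fact (1 ≤ ENNReal.ofReal p)] [Fact (1 ≤ ENNReal.ofReal q)] (hr : 1 / r = 1 / q - 1 / p)
    (A : lp (fun _ : κ => 𝕜) (ENNReal.ofReal p) →L[𝕜] lp (fun _ : ι => 𝕜) (ENNReal.ofReal q))
    {a : ι → κ → ℝ} (ha : ∀ j k, 0 ≤ a j k)
    (hAa : ∀ j k, A (lp.single (ENNReal.ofReal p) k 1) j = (a j k : 𝕜))
    (J : Finset ι) (K : Finset κ) :
    ∑ j ∈ J, ∑ k ∈ K, a j k ^ r ≤ ‖A‖ ^ r := by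
  have hq₀ : 0 < q := one_pos.trans_le hq
  have hp₀ : 0 < p := hq₀.trans hqp
  have hr₀ : 0 < r := Real.pos_of_one_div_eq_one_div_sub_one_div hq₀ hqp hr
  have hP : (ENNReal.ofReal p).toReal = p := ENNReal.toReal_ofReal hp₀.le
  have hQ : (ENNReal.ofReal q).toReal = q := ENNReal.toReal_ofReal hq₀.le
  have hrq : r / q = 1 + r / p := by
    field_simp at hr ⊢
    linarith
  set S := ∑ j ∈ J, ∑ k ∈ K, a j k ^ r
  set c : κ → ℝ := fun k => ∑ j ∈ J, a j k ^ r
  have hc (k : κ) : 0 ≤ c k := sum_nonneg fun j _ => Real.rpow_nonneg (ha j k) r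
  set x := ∑ k ∈ K, lp.single (ENNReal.ofReal p) k ((c k ^ (1 / p) : ℝ) : 𝕜) with hx_def
  have hx : ‖x‖ ^ p = S := by
    have h := lp.norm_sum_single (by rwa [hP]) (fun k => ((c k ^ (1 / p) : ℝ) : 𝕜)) K
    rw [hP] at h
    rw [h, show S = ∑ k ∈ K, c k from sum_comm]
    refine sum_congr rfl fun k _ => ?_
    rw [RCLike.norm_ofReal, abs_of_nonneg (Real.rpow_nonneg (hc k) _), ← Real.rpow_mul (hc k),
      one_div_mul_cancel hp₀.ne', Real.rpow_one]
  have hAx (j : ι) : ‖A x j‖ = ∑ k ∈ K, a j k * c k ^ (1 / p) := by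
    simp only [hx_def, apply_sum_lpSingle, hAa, ← RCLike.ofReal_mul, ← RCLike.ofReal_sum,
      RCLike.norm_ofReal, mul_comm]
    exact abs_of_nonneg (sum_nonneg fun k _ => mul_nonneg (ha j k) (Real.rpow_nonneg (hc k) _))
  have hrow (j : ι) (hj : j ∈ J) : ∑ k ∈ K, a j k ^ r ≤ ‖A x j‖ ^ q := by
    rw [hAx]
    exact Real.sum_rpow_le_rpow_sum_mul_rpow hq hp₀ hr₀ hrq (fun k _ => ha j k)
      (fun k _ => single_le_sum (fun i _ => Real.rpow_nonneg (ha i k) r) hj)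
  have hS : S ≤ ‖A‖ ^ q * S ^ (q / p) := calc
    S ≤ ∑ j ∈ J, ‖A x j‖ ^ q := sum_le_sum hrow
    _ ≤ ‖A x‖ ^ q := by
        simpa only [hQ] using lp.sum_rpow_le_norm_rpow (by rwa [hQ]) (A x) J
    _ ≤ (‖A‖ * ‖x‖) ^ q := Real.rpow_le_rpow (norm_nonneg _) (A.le_opNorm x) hq₀.le
    _ = ‖A‖ ^ q * S ^ (q / p) := by
        rw [Real.mul_rpow (norm_nonneg _) (norm_nonneg _), ← hx, ← Real.rpow_mul (norm_nonneg _),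
          mul_div_cancel₀ _ hp₀.ne']
  exact Real.le_rpow_of_le_rpow_mul_rpow
    (sum_nonneg fun j _ => sum_nonneg fun k _ => Real.rpow_nonneg (ha j k) r) (norm_nonneg A)
    hq₀ hqp hr hS

end ContinuousLinearMap

/-- **Hardy–Littlewood entrywise `ℓ^r` inequality for positive operators, with constant 1.**
For `1 ≤ q < p < ∞` and `1/r = 1/q - 1/p`, every bounded operator `A : ℓ^p → ℓ^q` whose
matrix entries `(A e_k) j = a j k` are nonnegative reals satisfies
`(∑_j ∑_k (a j k)^r)^(1/r) ≤ ‖A‖` (regardless of whether `r ≥ 2` or `r ≤ 2`). -/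
theorem hardy_littlewood_entrywise_positive (p q r : ℝ) (hq1 : 1 ≤ q) (hqp : q < p)
    [Fact (1 ≤ ENNReal.ofReal p)] [Fact (1 ≤ ENNReal.ofReal q)]
    (hrdef : 1 / r = 1 / q - 1 / p)
    (A : lp (fun _ : ℕ => ℂ) (ENNReal.ofReal p) →L[ℂ] lp (fun _ : ℕ => ℂ) (ENNReal.ofReal q))
    (a : ℕ → ℕ → ℝ) (ha : ∀ j k, 0 ≤ a j k)
    (hAa : ∀ j k : ℕ, A (lp.single (ENNReal.ofReal p) k 1) j = (a j k : ℂ)) :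
    (∑' j : ℕ, ∑' k : ℕ, a j k ^ r) ^ (1 / r) ≤ ‖A‖ := by
  have hr : 0 < r := Real.pos_of_one_div_eq_one_div_sub_one_div (one_pos.trans_le hq1) hqp hrdef
  have har (j k : ℕ) : 0 ≤ a j k ^ r := Real.rpow_nonneg (ha j k) r
  rw [one_div, Real.rpow_inv_le_iff_of_pos (tsum_nonneg fun j => tsum_nonneg (har j))
    (norm_nonneg A) hr]
  exact Real.tsum_tsum_le_of_sum_sum_le har
    (A.sum_sum_entry_rpow_le_opNorm_rpow hq1 hqp hrdef ha hAa)
end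

section
/- Let 1 ≤ q < p < ∞, define r by 1/r = 1/q − 1/p and s by 1/s = 1/(2r) + 1/4, and suppose r ≤ 2 (so that r ≤ s ≤ 2). For every bounded linear operator A : ℓ^p → ℓ^q whose matrix entries a_{j,k} := (A e_k)_j are all nonnegative reals, one has ( ∑_j ∑_k a_{j,k}^s )^{1/s} ≤ ( ∑_j ∑_k a_{j,k}^r )^{1/r} ≤ ‖A‖, i.e. the Hardy–Littlewood ℓ^s inequality holds with constant M = 1 and is improved: the exponent s may be replaced by the smaller exponent r. -/
open Finset

private lemma two_term_rpow (x y e : ℝ) (hx : 0 ≤ x) (hy : 0 ≤ y) (he : 1 ≤ e) :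
    x ^ e + y ^ e ≤ (x + y) ^ e := by
  have h := NNReal.add_rpow_le_rpow_add (⟨x, hx⟩ : NNReal) ⟨y, hy⟩ he
  rw [← NNReal.coe_le_coe] at h
  push_cast [NNReal.coe_rpow] at h
  exact h

private lemma sum_rpow_le_rpow_sum' {ι : Type*} (F : Finset ι) (f : ι → ℝ)
    (hf : ∀ i ∈ F, 0 ≤ f i) {e : ℝ} (he : 1 ≤ e) :
    ∑ i ∈ F, f i ^ e ≤ (∑ i ∈ F, f i) ^ e := by
  classical
  induction F using Finset.induction_on with
  | empty => simp [Real.zero_rpow (by linarith : e ≠ 0)]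
  | @insert i Fs hnot ih =>
    rw [Finset.sum_insert hnot, Finset.sum_insert hnot]
    have h1 : 0 ≤ f i := hf i (mem_insert_self _ _)
    have h2 : ∀ j ∈ Fs, 0 ≤ f j := fun j hj => hf j (mem_insert_of_mem hj)
    have h3 : 0 ≤ ∑ j ∈ Fs, f j := Finset.sum_nonneg h2
    calc f i ^ e + ∑ j ∈ Fs, f j ^ e ≤ f i ^ e + (∑ j ∈ Fs, f j) ^ e := by
          linarith [ih h2]
      _ ≤ (f i + ∑ j ∈ Fs, f j) ^ e := two_term_rpow _ _ _ h1 h3 he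

/-- **Improved Hardy–Littlewood `ℓ^s` inequality for positive operators.**
For `1 ≤ q < p < ∞`, `1/r = 1/q - 1/p`, `1/s = 1/(2r) + 1/4` and `r ≤ 2` (so `r ≤ s ≤ 2`),
every bounded operator `A : ℓ^p → ℓ^q` whose matrix entries `(A e_k) j = a j k` are nonnegative
reals satisfies `(∑_j ∑_k (a j k)^s)^(1/s) ≤ (∑_j ∑_k (a j k)^r)^(1/r) ≤ ‖A‖`. -/
theorem hardy_littlewood_s_positive_improved (p q r s : ℝ) (hq1 : 1 ≤ q) (hqp : q < p)
    [Fact (1 ≤ ENNReal.ofReal p)] [Fact (1 ≤ ENNReal.ofReal q)]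
    (hrdef : 1 / r = 1 / q - 1 / p) (hsdef : 1 / s = 1 / (2 * r) + 1 / 4) (hr2 : r ≤ 2)
    (A : lp (fun _ : ℕ => ℂ) (ENNReal.ofReal p) →L[ℂ] lp (fun _ : ℕ => ℂ) (ENNReal.ofReal q))
    (a : ℕ → ℕ → ℝ) (ha : ∀ j k, 0 ≤ a j k)
    (hAa : ∀ j k : ℕ, A (lp.single (ENNReal.ofReal p) k 1) j = (a j k : ℂ)) :
    (∑' j : ℕ, ∑' k : ℕ, a j k ^ s) ^ (1 / s) ≤ (∑' j : ℕ, ∑' k : ℕ, a j k ^ r) ^ (1 / r) ∧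
    (∑' j : ℕ, ∑' k : ℕ, a j k ^ r) ^ (1 / r) ≤ ‖A‖ := by
  have hq0 : 0 < q := lt_of_lt_of_le zero_lt_one hq1
  have hp0 : 0 < p := hq0.trans hqp
  have hppos : 0 < 1 / p := by positivity
  have hrinv : 0 < 1 / r := by
    rw [hrdef]
    have : 1 / p < 1 / q := one_div_lt_one_div_of_lt hq0 hqp
    linarith
  have hr0 : 0 < r := one_div_pos.mp hrinv
  have hqr : q < r := by
    have h1 : 1 / r < 1 / q := by rw [hrdef]; linarith
    exact lt_of_one_div_lt_one_div hr0 h1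
  have hsinv : 0 < 1 / s := by rw [hsdef]; positivity
  have hs0 : 0 < s := one_div_pos.mp hsinv
  have hrs : r ≤ s := by
    have h1 : (1:ℝ) / 4 ≤ 1 / (2 * r) := by
      apply one_div_le_one_div_of_le (by linarith) (by linarith)
    have h2 : 1 / s ≤ 1 / r := by
      rw [hsdef]
      have : 1 / (2 * r) = (1 / r) / 2 := by ring
      linarith [this ▸ h1]
    exact le_of_one_div_le_one_div hs0 h2
  set P := ENNReal.ofReal p with hP
  set Q := ENNReal.ofReal q with hQ
  have hPt : P.toReal = p := ENNReal.toReal_ofReal hp0.le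
  have hQt : Q.toReal = q := ENNReal.toReal_ofReal hq0.le
  have hPt0 : 0 < P.toReal := by rw [hPt]; exact hp0
  have hQt0 : 0 < Q.toReal := by rw [hQt]; exact hq0
  -- Step A
  have stepA : ∀ (F G : Finset ℕ) (t : ℕ → ℝ), (∀ k, 0 ≤ t k) → (∑ k ∈ F, t k ^ p) ≤ 1 →
      ∑ j ∈ G, (∑ k ∈ F, t k * a j k) ^ q ≤ ‖A‖ ^ q := by
    intro F G t ht htp
    set x : lp (fun _ : ℕ => ℂ) P := ∑ k ∈ F, (t k : ℂ) • lp.single P k 1 with hx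
    have hxcoord : ∀ j : ℕ, x j = if j ∈ F then (t j : ℂ) else 0 := by
      intro j
      rw [hx]
      rw [lp.coeFn_sum]
      simp only [Finset.sum_apply, Pi.smul_apply, lp.coeFn_smul]
      by_cases hj : j ∈ F
      · rw [if_pos hj, Finset.sum_eq_single j]
        · rw [lp.single_apply_self, smul_eq_mul, mul_one]
        · intro k hk hkj
          rw [lp.single_apply_ne P k 1 (Ne.symm hkj), smul_zero]
        · intro h; exact absurd hj h
      · rw [if_neg hj, Finset.sum_eq_zero]
        intro k hk
        rw [lp.single_apply_ne P k 1 (fun hh => hj (by rw [hh]; exact hk)), smul_zero]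
    have hxnorm : ‖x‖ ≤ 1 := by
      rw [lp.norm_eq_tsum_rpow hPt0 x]
      have hsupp : ∀ j ∉ F, ‖x j‖ ^ P.toReal = 0 := by
        intro j hj
        rw [hxcoord j, if_neg hj, norm_zero, Real.zero_rpow (by rw [hPt]; exact hp0.ne')]
      rw [tsum_eq_sum hsupp]
      have : ∀ j ∈ F, ‖x j‖ ^ P.toReal = t j ^ p := by
        intro j hj
        rw [hxcoord j, if_pos hj, Complex.norm_real, Real.norm_eq_abs, abs_of_nonneg (ht j), hPt]
      rw [Finset.sum_congr rfl this]
      apply Real.rpow_le_one (Finset.sum_nonneg fun j _ => Real.rpow_nonneg (ht j) p) htp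
      positivity
    have hAx : ∀ j : ℕ, (A x) j = ((∑ k ∈ F, t k * a j k : ℝ) : ℂ) := by
      intro j
      rw [hx, map_sum]
      rw [lp.coeFn_sum]
      simp only [Finset.sum_apply, map_smul, lp.coeFn_smul, Pi.smul_apply]
      push_cast
      apply Finset.sum_congr rfl
      intro k _
      rw [hAa j k, smul_eq_mul]
    have hnn : ∀ j : ℕ, 0 ≤ ∑ k ∈ F, t k * a j k := fun j =>
      Finset.sum_nonneg fun k _ => mul_nonneg (ht k) (ha j k)
    calc ∑ j ∈ G, (∑ k ∈ F, t k * a j k) ^ q = ∑ j ∈ G, ‖(A x) j‖ ^ Q.toReal := by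
          apply Finset.sum_congr rfl
          intro j _
          rw [hAx j, Complex.norm_real, Real.norm_eq_abs, abs_of_nonneg (hnn j), hQt]
      _ ≤ ‖A x‖ ^ Q.toReal := lp.sum_rpow_le_norm_rpow hQt0 (A x) G
      _ ≤ ‖A‖ ^ q := by
          rw [hQt]
          apply Real.rpow_le_rpow (norm_nonneg _) _ hq0.le
          calc ‖A x‖ ≤ ‖A‖ * ‖x‖ := A.le_opNorm x
            _ ≤ ‖A‖ * 1 := by
                apply mul_le_mul_of_nonneg_left hxnorm (norm_nonneg A)
            _ = ‖A‖ := mul_one _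
  -- exponents for Hölder step
  have hrq1 : 1 ≤ r / q := by
    rw [le_div_iff₀ hq0]; linarith
  have hqreq : q * (r / q) = r := by field_simp
  -- Step B+C : key finite bound
  have key : ∀ (G F : Finset ℕ), ∑ j ∈ G, ∑ k ∈ F, a j k ^ r ≤ ‖A‖ ^ r := by
    intro G F
    set c : ℕ → ℝ := fun k => ∑ j ∈ G, a j k ^ q with hc
    have hc0 : ∀ k, 0 ≤ c k := fun k => Finset.sum_nonneg fun j _ => Real.rpow_nonneg (ha j k) q
    set S := ∑ k ∈ F, c k ^ (r / q) with hSdef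
    have hS0 : 0 ≤ S := Finset.sum_nonneg fun k _ => Real.rpow_nonneg (hc0 k) _
    have h1 : ∑ j ∈ G, ∑ k ∈ F, a j k ^ r ≤ S := by
      rw [Finset.sum_comm]
      apply Finset.sum_le_sum
      intro k _
      have heq : ∀ j ∈ G, a j k ^ r = (a j k ^ q) ^ (r / q) := by
        intro j _
        rw [← Real.rpow_mul (ha j k), hqreq]
      rw [Finset.sum_congr rfl heq]
      exact sum_rpow_le_rpow_sum' G _ (fun j _ => Real.rpow_nonneg (ha j k) q) hrq1
    rcases eq_or_lt_of_le hS0 with hSz | hSpos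
    · exact h1.trans (by rw [← hSz]; exact Real.rpow_nonneg (norm_nonneg A) r)
    · -- choose optimal t
      set t : ℕ → ℝ := fun k => (c k ^ (r / q) / S) ^ (1 / p) with htdef
      have ht0 : ∀ k, 0 ≤ t k := fun k =>
        Real.rpow_nonneg (div_nonneg (Real.rpow_nonneg (hc0 k) _) hS0) _
      have hrqp : r / q = r / p + 1 := by
        have h2 : (1:ℝ) / q = 1 / r + 1 / p := by linarith [hrdef]
        calc r / q = r * (1 / q) := by ring
          _ = r * (1 / r + 1 / p) := by rw [h2]
          _ = r * (1 / r) + r / p := by ring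
          _ = 1 + r / p := by rw [mul_one_div_cancel hr0.ne']
          _ = r / p + 1 := by ring
      have hqrp : q / r = 1 - q / p := by
        calc q / r = q * (1 / r) := by ring
          _ = q * (1 / q - 1 / p) := by rw [hrdef]
          _ = q * (1 / q) - q / p := by ring
          _ = 1 - q / p := by rw [mul_one_div_cancel hq0.ne']
      have htpow : ∀ k, t k ^ p = c k ^ (r / q) / S := by
        intro k
        show ((c k ^ (r / q) / S) ^ (1 / p)) ^ p = c k ^ (r / q) / S
        rw [← Real.rpow_mul (div_nonneg (Real.rpow_nonneg (hc0 k) _) hS0),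
          one_div_mul_cancel hp0.ne', Real.rpow_one]
      have htp : ∑ k ∈ F, t k ^ p = 1 := by
        have : ∀ k ∈ F, t k ^ p = c k ^ (r / q) / S := fun k _ => htpow k
        rw [Finset.sum_congr rfl this, ← Finset.sum_div, ← hSdef, div_self hSpos.ne']
      have hA := stepA F G t ht0 htp.le
      -- lower bound for the left side of hA
      have h2 : ∑ k ∈ F, t k ^ q * c k ≤ ∑ j ∈ G, (∑ k ∈ F, t k * a j k) ^ q := by
        have e1 : ∑ k ∈ F, t k ^ q * c k = ∑ j ∈ G, ∑ k ∈ F, (t k * a j k) ^ q := by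
          rw [Finset.sum_comm]
          apply Finset.sum_congr rfl
          intro k _
          rw [hc, Finset.mul_sum]
          apply Finset.sum_congr rfl
          intro j _
          rw [Real.mul_rpow (ht0 k) (ha j k)]
        rw [e1]
        apply Finset.sum_le_sum
        intro j _
        exact sum_rpow_le_rpow_sum' F _ (fun k _ => mul_nonneg (ht0 k) (ha j k)) hq1
      have h3 : ∑ k ∈ F, t k ^ q * c k = S ^ (q / r) := by
        have e2 : ∀ k ∈ F, t k ^ q * c k = c k ^ (r / q) / S ^ (q / p) := by
          intro k _
          have htq : t k ^ q = c k ^ (r / p) / S ^ (q / p) := by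
            rw [htdef, ← Real.rpow_mul (div_nonneg (Real.rpow_nonneg (hc0 k) _) hS0),
              Real.div_rpow (Real.rpow_nonneg (hc0 k) _) hS0,
              ← Real.rpow_mul (hc0 k)]
            congr 2 <;> field_simp
          rw [htq, div_mul_eq_mul_div]
          congr 1
          nth_rewrite 2 [← Real.rpow_one (c k)]
          rw [← Real.rpow_add' (hc0 k) (by positivity : r / p + 1 ≠ 0)]
          rw [hrqp]
        rw [Finset.sum_congr rfl e2, ← Finset.sum_div, ← hSdef]
        nth_rewrite 1 [← Real.rpow_one S]
        rw [← Real.rpow_sub hSpos, hqrp]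
      have h4 : S ^ (q / r) ≤ ‖A‖ ^ q := h3 ▸ (h2.trans hA)
      have h5 : S ≤ ‖A‖ ^ r := by
        have h6 := Real.rpow_le_rpow (Real.rpow_nonneg hS0 _) h4 (div_nonneg hr0.le hq0.le)
        have hexp1 : q / r * (r / q) = 1 := by field_simp
        rwa [← Real.rpow_mul hS0, ← Real.rpow_mul (norm_nonneg A), hexp1, hqreq,
          Real.rpow_one] at h6
      exact h1.trans h5
  -- pass to infinite sums
  set g : ℕ × ℕ → ℝ := fun x => a x.1 x.2 ^ r with hgdef
  have hg0 : ∀ x : ℕ × ℕ, 0 ≤ g x := fun x => Real.rpow_nonneg (ha x.1 x.2) r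
  have hgbound : ∀ u : Finset (ℕ × ℕ), ∑ x ∈ u, g x ≤ ‖A‖ ^ r := by
    intro u
    calc ∑ x ∈ u, g x ≤ ∑ x ∈ (u.image Prod.fst) ×ˢ (u.image Prod.snd), g x := by
          apply Finset.sum_le_sum_of_subset_of_nonneg
          · intro x hx
            exact Finset.mem_product.mpr ⟨Finset.mem_image_of_mem _ hx,
              Finset.mem_image_of_mem _ hx⟩
          · intro x _ _; exact hg0 x
      _ = ∑ j ∈ u.image Prod.fst, ∑ k ∈ u.image Prod.snd, a j k ^ r := Finset.sum_product _ _ _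
      _ ≤ ‖A‖ ^ r := key _ _
  have hgsum : Summable g := summable_of_sum_le hg0 hgbound
  have hgts : ∑' x, g x ≤ ‖A‖ ^ r := Summable.tsum_le_of_sum_le hgsum hgbound
  have hrow : ∀ j, Summable fun k => a j k ^ r := fun j => hgsum.prod_factor j
  have heq : ∑' j, ∑' k, a j k ^ r = ∑' x, g x := (Summable.tsum_prod' hgsum hrow).symm
  set Sr := ∑' j : ℕ, ∑' k : ℕ, a j k ^ r with hSr
  have hSr0 : 0 ≤ Sr := by
    rw [heq]; exact tsum_nonneg hg0
  set T := Sr ^ (1 / r) with hT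
  have hT0 : 0 ≤ T := Real.rpow_nonneg hSr0 _
  have hSrT : Sr = T ^ r := by
    rw [hT, ← Real.rpow_mul hSr0, one_div_mul_cancel hr0.ne', Real.rpow_one]
  have hible : Sr ≤ ‖A‖ ^ r := by rw [heq]; exact hgts
  have second : T ≤ ‖A‖ := by
    calc T = Sr ^ (1 / r) := hT
      _ ≤ (‖A‖ ^ r) ^ (1 / r) := Real.rpow_le_rpow hSr0 hible hrinv.le
      _ = ‖A‖ := by
          rw [← Real.rpow_mul (norm_nonneg A), mul_one_div, div_self hr0.ne', Real.rpow_one]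
  refine ⟨?_, second⟩
  -- first inequality
  have habound : ∀ j k, a j k ≤ T := by
    intro j k
    have h1 : a j k ^ r ≤ Sr := by
      rw [heq]
      exact Summable.le_tsum hgsum (j, k) fun b _ => hg0 b
    calc a j k = (a j k ^ r) ^ (1 / r) := by
          rw [← Real.rpow_mul (ha j k), mul_one_div, div_self hr0.ne', Real.rpow_one]
      _ ≤ T := Real.rpow_le_rpow (Real.rpow_nonneg (ha j k) r) h1 hrinv.le
  have hs_a : ∀ x : ℕ × ℕ, a x.1 x.2 ^ s ≤ T ^ (s - r) * g x := by
    intro ⟨j, k⟩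
    have e1 : a j k ^ s = a j k ^ (s - r) * a j k ^ r := by
      rw [← Real.rpow_add' (ha j k) (by rw [sub_add_cancel]; exact hs0.ne'), sub_add_cancel]
    rw [e1]
    exact mul_le_mul_of_nonneg_right
      (Real.rpow_le_rpow (ha j k) (habound j k) (by linarith))
      (Real.rpow_nonneg (ha j k) r)
  have hssum : Summable (fun x : ℕ × ℕ => a x.1 x.2 ^ s) :=
    Summable.of_nonneg_of_le (fun x => Real.rpow_nonneg (ha x.1 x.2) s) hs_a (hgsum.mul_left _)
  have hseq : ∑' j, ∑' k, a j k ^ s = ∑' x : ℕ × ℕ, a x.1 x.2 ^ s :=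
    (Summable.tsum_prod' hssum fun j => hssum.prod_factor j).symm
  have hsts : ∑' j, ∑' k, a j k ^ s ≤ T ^ s := by
    rw [hseq]
    calc ∑' x : ℕ × ℕ, a x.1 x.2 ^ s ≤ ∑' x : ℕ × ℕ, T ^ (s - r) * g x :=
          Summable.tsum_le_tsum hs_a hssum (hgsum.mul_left _)
      _ = T ^ (s - r) * ∑' x, g x := tsum_mul_left
      _ = T ^ (s - r) * T ^ r := by rw [← heq, hSrT]
      _ = T ^ s := by
          rw [← Real.rpow_add' hT0 (by rw [sub_add_cancel]; exact hs0.ne'), sub_add_cancel]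
  calc (∑' j : ℕ, ∑' k : ℕ, a j k ^ s) ^ (1 / s) ≤ (T ^ s) ^ (1 / s) := by
        apply Real.rpow_le_rpow _ hsts hsinv.le
        rw [hseq]
        exact tsum_nonneg fun x => Real.rpow_nonneg (ha x.1 x.2) s
    _ = T := by rw [← Real.rpow_mul hT0, mul_one_div, div_self hs0.ne', Real.rpow_one]
end
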